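/- arXiv:2110.10445 — 3 statements merged into one kernel-verified Lean document; each statement's English description precedes it below -/
import Mathlib

section
/- If S ⊆ ℤ^n is an L₂♮-convex set, then there exist values γ_{I,J} ∈ ℤ ∪ {+∞}, indexed by pairs of disjoint subsets I, J of N = {1,…,n} with |I| − |J| ∈ {−1, 0, 1}, such that S = {x ∈ ℤ^n : x(J) − x(I) ≤ γ_{I,J} for all disjoint I, J ⊆ N with |I| − |J| ∈ {−1, 0, 1}}. -/
open Pointwise

/-- A nonempty set `S ⊆ ℤⁿ` is L-convex if it is closed under componentwise
max/min and under translation by integer multiples of the all-ones vector. -/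
def IsLConvexSet {n : ℕ} (S : Set (Fin n → ℤ)) : Prop :=
  S.Nonempty ∧
  (∀ x ∈ S, ∀ y ∈ S, x ⊔ y ∈ S ∧ x ⊓ y ∈ S) ∧
  (∀ x ∈ S, ∀ μ : ℤ, (x + fun _ => μ) ∈ S)

/-- A nonempty set `S ⊆ ℤⁿ` is L♮-convex if it is the intersection of an
L-convex set `T ⊆ ℤ^{n+1}` with the coordinate hyperplane "last coordinate 0". -/
def IsLNatConvexSet {n : ℕ} (S : Set (Fin n → ℤ)) : Prop :=
  S.Nonempty ∧
  ∃ T : Set (Fin (n + 1) → ℤ), IsLConvexSet T ∧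
    S = {x : Fin n → ℤ | Fin.snoc x (0 : ℤ) ∈ T}

/-- A set is L₂♮-convex if it is the Minkowski sum of two L♮-convex sets. -/
def IsL2NatConvexSet {n : ℕ} (S : Set (Fin n → ℤ)) : Prop :=
  ∃ S₁ S₂ : Set (Fin n → ℤ), IsLNatConvexSet S₁ ∧ IsLNatConvexSet S₂ ∧ S = S₁ + S₂

/-!
An L♮-convex set is described by difference constraints `u j - u i ≤ c i j` on `ℤ^{n+1}` (with an
extra coordinate fixed to `0`), so `x ∈ S₁ + S₂` iff the difference-constraint system expressing
`u ∈ S₁` and `x - u ∈ S₂` is feasible. If it is not, it has a negative cycle, which may be taken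
simple. On the arcs of the cycle coming from `S₁`, let `J` be the heads that are not tails and `I`
the tails that are not heads; adding up the constraints along the cycle telescopes to
`z(J) - z(I) < x(J) - x(I)` for every `z ∈ S₁ + S₂`. Here `|I| = |J|`, and dropping the extra
coordinate changes `|I| - |J|` by at most one.
-/

open Finset

lemma coe_sub_le_iff_le_coe_add {a b : ℤ} {r : WithTop ℤ} :
    ((a - b : ℤ) : WithTop ℤ) ≤ r ↔ (a : WithTop ℤ) ≤ b + r := by
  cases r with
  | top => simp
  | coe r => norm_cast; omega

section DifferenceConstraints

variable {V : Type*}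

def walkCost (c : V → V → WithTop ℤ) (l : List V) : WithTop ℤ :=
  (List.zipWith c l l.tail).sum

variable (c : V → V → WithTop ℤ)

@[simp] lemma walkCost_singleton (a : V) : walkCost c [a] = 0 := rfl

@[simp] lemma walkCost_cons_cons (a b : V) (l : List V) :
    walkCost c (a :: b :: l) = c a b + walkCost c (b :: l) := rfl

lemma walkCost_append_cons (p : List V) (v : V) (q : List V) :
    walkCost c (p ++ v :: q) = walkCost c (p ++ [v]) + walkCost c (v :: q) := by
  induction p with
  | nil => simp
  | cons a p ih => cases p <;> simp_all [add_assoc]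

lemma walkCost_concat {l : List V} (hl : l ≠ []) (v : V) :
    walkCost c (l ++ [v]) = walkCost c l + c (l.getLast hl) v := by
  conv_lhs => rw [← List.dropLast_append_getLast hl, List.append_assoc, List.singleton_append,
    walkCost_append_cons, List.dropLast_append_getLast hl]
  simp

lemma sum_formPerm_eq_walkCost [DecidableEq V] {x : V} {l : List V} (hl : (x :: l).Nodup) :
    ∑ v ∈ (x :: l).toFinset, c v ((x :: l).formPerm v) = walkCost c (x :: l ++ [x]) := by
  have hrot : (x :: l).map (x :: l).formPerm = l ++ [x] := by
    rw [← show (x :: l).rotate 1 = l ++ [x] by simp]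
    exact List.ext_getElem (by simp) fun i _ _ => by
      rw [List.getElem_map, List.formPerm_apply_getElem _ hl, List.getElem_rotate]
  have hzip :
      List.zipWith c (x :: (l ++ [x])) (l ++ [x]) = List.zipWith c (x :: l) (l ++ [x]) := by
    simpa using List.zipWith_append (f := c) (l₁ := x :: l) (l₁' := [x]) (l₂ := l ++ [x])
      (l₂' := []) (by simp)
  rw [List.sum_toFinset _ hl, walkCost, List.cons_append, List.tail_cons, hzip, ← hrot,
    List.zipWith_map_right, List.zipWith_self]

/-- The potential is the cost of a cheapest simple path ending at each vertex. -/
theorem exists_potential_of_walkCost_cycle_nonneg [Fintype V] [DecidableEq V]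
    (hc : ∀ x l, (x :: l).Nodup → 0 ≤ walkCost c (x :: l ++ [x])) :
    ∃ y : V → ℤ, ∀ i j, ((y j - y i : ℤ) : WithTop ℤ) ≤ c i j := by
  have hfin (j : V) : {p : List V | (p ++ [j]).Nodup}.Finite :=
    (List.finite_length_le V (Fintype.card V)).subset fun p (hp : (p ++ [j]).Nodup) => by
      have := hp.length_le_card
      rw [List.length_append, List.length_singleton] at this
      exact Nat.le_of_succ_le this
  choose p hp hmin using fun j =>
    Set.exists_min_image _ (fun p => walkCost c (p ++ [j])) (hfin j) ⟨[], by simp⟩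
  have hd (j : V) : walkCost c (p j ++ [j]) ≠ ⊤ :=
    ne_top_of_le_ne_top (by simp) (hmin j [] (by simp))
  refine ⟨fun j => (walkCost c (p j ++ [j])).untop (hd j), fun i j => ?_⟩
  rw [coe_sub_le_iff_le_coe_add, WithTop.coe_untop, WithTop.coe_untop]
  by_cases hj : j ∈ p i ++ [i]
  · obtain ⟨a, r, har⟩ := List.append_of_mem hj
    have hnd : (a ++ j :: r).Nodup := har ▸ hp i
    have hlast : (j :: r).getLast (List.cons_ne_nil _ _) = i := by
      rw [← List.getLast_append_of_ne_nil (l := a) (by simp),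
        List.getLast_congr _ (by simp) har.symm]
      simp
    have hcycle := hc j r (hnd.sublist (List.sublist_append_right _ _))
    rw [walkCost_concat c (List.cons_ne_nil _ _), hlast] at hcycle
    calc walkCost c (p j ++ [j])
        ≤ walkCost c (a ++ [j]) :=
          hmin j a (hnd.sublist (by simp))
      _ ≤ walkCost c (a ++ [j]) + (walkCost c (j :: r) + c i j) := le_add_of_nonneg_right hcycle
      _ = walkCost c (p i ++ [i]) + c i j := by rw [har, walkCost_append_cons c a j r, add_assoc]
  · calc walkCost c (p j ++ [j])
        ≤ walkCost c (p i ++ [i] ++ [j]) :=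
          hmin j _ (List.nodup_append.2
            ⟨hp i, List.nodup_singleton j, fun _ _ _ _ _ => hj (by simp_all)⟩)
      _ = walkCost c (p i ++ [i]) + c i j := by rw [walkCost_concat c (by simp)]; simp


theorem exists_potential_or_negative_cycle [Fintype V] [DecidableEq V] :
    (∃ y : V → ℤ, ∀ i j, ((y j - y i : ℤ) : WithTop ℤ) ≤ c i j) ∨
      ∃ (σ : Equiv.Perm V) (D : Finset V), {v | σ v ≠ v} ⊆ D ∧ ∑ v ∈ D, c v (σ v) < 0 := by
  refine or_iff_not_imp_right.2 fun hcycle =>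
    exists_potential_of_walkCost_cycle_nonneg c fun x l hl => ?_
  rw [← sum_formPerm_eq_walkCost c hl]
  exact not_lt.1 fun hneg => hcycle ⟨_, _, List.support_formPerm_le' _, hneg⟩

end DifferenceConstraints

section Telescoping

variable {V M : Type*} [AddCommGroup M] (σ : Equiv.Perm V) (f : V → M)

lemma sum_comp_perm_sub_eq_zero {D : Finset V} (hD : {v | σ v ≠ v} ⊆ D) :
    ∑ v ∈ D, (f (σ v) - f v) = 0 := by
  rw [sum_sub_distrib, σ.sum_comp D f hD, sub_self]

lemma sum_comp_perm_sub [DecidableEq V] (A : Finset V) :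
    ∑ v ∈ A, (f (σ v) - f v) = ∑ v ∈ A.image σ \ A, f v - ∑ v ∈ A \ A.image σ, f v := by
  rw [sum_sub_distrib, ← sum_image σ.injective.injOn, sum_sdiff_sub_sum_sdiff]

lemma card_image_perm_sdiff [DecidableEq V] (A : Finset V) :
    #(A.image σ \ A) = #(A \ A.image σ) := by
  have h₁ := card_sdiff_add_card_inter (A.image σ) A
  have h₂ := card_sdiff_add_card_inter A (A.image σ)
  rw [card_image_of_injective A σ.injective, inter_comm] at h₁
  omega

end Telescoping

section Supremum

variable {α : Type*} {s : Set α} {f : α → ℤ}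

/-- `⊤` when `f` is unbounded above on `s`. -/
noncomputable def supOn (s : Set α) (f : α → ℤ) : WithTop ℤ :=
  sSup ((fun a => (f a : WithTop ℤ)) '' s)

lemma le_supOn {a : α} (ha : a ∈ s) : (f a : WithTop ℤ) ≤ supOn s f :=
  le_csSup (OrderTop.bddAbove _) ⟨a, ha, rfl⟩

lemma exists_le_of_le_supOn (hs : s.Nonempty) {t : ℤ} (ht : (t : WithTop ℤ) ≤ supOn s f) :
    ∃ a ∈ s, t ≤ f a := by
  by_contra! h
  have hle : supOn s f ≤ ((t - 1 : ℤ) : WithTop ℤ) :=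
    csSup_le (hs.image _) fun _ ⟨a, ha, hfa⟩ =>
      hfa ▸ WithTop.coe_le_coe.2 (Int.le_sub_one_of_lt (h a ha))
  have := ht.trans hle
  norm_cast at this
  omega

end Supremum

section ArcCost

variable {ι : Type*} {T₁ T₂ : Set (ι → ℤ)}

/-- `u j - u i ≤ sumArcCost T₁ T₂ x i j` for all `i j` says that `u ∈ T₁` and `x - u ∈ T₂`, when
both sets are described by their difference bounds. -/
noncomputable def sumArcCost (T₁ T₂ : Set (ι → ℤ)) (x : ι → ℤ) (i j : ι) : WithTop ℤ :=
  min (supOn T₁ fun z => z j - z i) (((x j - x i : ℤ) : WithTop ℤ) + supOn T₂ fun z => z i - z j)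

/-- `J` and `I` are the heads that are not tails and the tails that are not heads among the arcs of
the cycle whose cost comes from `T₁`. -/
theorem exists_separating_of_negative_cycle [DecidableEq ι] {x : ι → ℤ} {σ : Equiv.Perm ι}
    {D : Finset ι} (hD : {v | σ v ≠ v} ⊆ D) (hneg : ∑ v ∈ D, sumArcCost T₁ T₂ x v (σ v) < 0) :
    ∃ I J : Finset ι, Disjoint I J ∧ #I = #J ∧
      ∀ z ∈ T₁ + T₂, ∑ j ∈ J, z j - ∑ i ∈ I, z i < ∑ j ∈ J, x j - ∑ i ∈ I, x i := by
  let p : ι → Prop := fun v => (supOn T₁ fun z => z (σ v) - z v) ≤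
    ((x (σ v) - x v : ℤ) : WithTop ℤ) + supOn T₂ fun z => z v - z (σ v)
  let A := D.filter p
  let B := D.filter fun v => ¬ p v
  refine ⟨A \ A.image σ, A.image σ \ A, disjoint_sdiff_sdiff, (card_image_perm_sdiff σ A).symm, ?_⟩
  rintro _ ⟨s₁, hs₁, s₂, hs₂, rfl⟩
  have hcost : ((∑ v ∈ A, (s₁ (σ v) - s₁ v) +
      ∑ v ∈ B, ((x (σ v) - x v) + (s₂ v - s₂ (σ v))) : ℤ) : WithTop ℤ) < (0 : ℤ) := by
    refine lt_of_le_of_lt ?_ hneg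
    rw [← sum_filter_add_sum_filter_not D p, WithTop.coe_add, WithTop.coe_sum, WithTop.coe_sum]
    refine add_le_add (sum_le_sum fun v hv => ?_) (sum_le_sum fun v hv => ?_)
    · rw [sumArcCost, min_eq_left (mem_filter.1 hv).2]
      exact le_supOn hs₁
    · rw [sumArcCost, min_eq_right (le_of_not_ge (mem_filter.1 hv).2), WithTop.coe_add]
      exact add_le_add_right (le_supOn hs₂) _
  have hB (f : ι → ℤ) : ∑ v ∈ B, (f (σ v) - f v) = -∑ v ∈ A, (f (σ v) - f v) := by
    rw [eq_neg_iff_add_eq_zero, add_comm, sum_filter_add_sum_filter_not,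
      sum_comp_perm_sub_eq_zero σ f hD]
  have hs₂B : ∑ v ∈ B, (s₂ v - s₂ (σ v)) = -∑ v ∈ B, (s₂ (σ v) - s₂ v) := by
    rw [← sum_neg_distrib]; simp
  simp only [Pi.add_apply, sum_add_distrib] at hcost ⊢
  have := WithTop.coe_lt_coe.1 hcost
  linarith [hB x, hB s₂, sum_comp_perm_sub σ s₁ A, sum_comp_perm_sub σ s₂ A,
    sum_comp_perm_sub σ x A]

end ArcCost

namespace IsLConvexSet

variable {m : ℕ} {T T₁ T₂ : Set (Fin m → ℤ)}

lemma mem_of_forall_exists_le (hT : IsLConvexSet T) {y : Fin m → ℤ}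
    (h : ∀ i j, ∃ z ∈ T, y j - y i ≤ z j - z i) : y ∈ T := by
  obtain ⟨⟨z₀, hz₀⟩, hlat, htrans⟩ := hT
  obtain _ | _ := isEmpty_or_nonempty (Fin m)
  · exact Subsingleton.elim z₀ y ▸ hz₀
  choose z hzT hz using h
  let w : Fin m → Fin m → Fin m → ℤ := fun i j => z j i + fun _ => y i - z j i i
  have hwi (i j : Fin m) : w i j i = y i := by simp [w]
  have hwj (i j : Fin m) : w i j j ≤ y j := by simp only [w, Pi.add_apply]; linarith [hz j i]
  let Z : Fin m → Fin m → ℤ := fun i => univ.inf' univ_nonempty (w i)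
  have hZT (i : Fin m) : Z i ∈ T :=
    inf'_induction _ _ (fun a ha b hb => (hlat a ha b hb).2) fun j _ => htrans _ (hzT j i) _
  have hZle (i : Fin m) : Z i ≤ y := fun j => (inf'_le (w i) (mem_univ j) j).trans (hwj i j)
  -- `Z i ≤ y` with equality at `i`, so `y` is the join of the `Z i`
  have hZi (i : Fin m) : y i ≤ Z i i := by
    simp only [Z, Finset.inf'_apply]
    exact le_inf' _ _ fun j _ => (hwi i j).ge
  have hsup : univ.sup' univ_nonempty Z = y :=
    le_antisymm (sup'_le _ _ fun i _ => hZle i) fun i =>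
      (hZi i).trans (le_sup' Z (mem_univ i) i)
  exact hsup ▸ sup'_induction _ _ (fun a ha b hb => (hlat a ha b hb).1) fun i _ => hZT i

lemma mem_iff (hT : IsLConvexSet T) (y : Fin m → ℤ) :
    y ∈ T ↔ ∀ i j, ((y j - y i : ℤ) : WithTop ℤ) ≤ supOn T fun z => z j - z i :=
  ⟨fun hy _ _ => le_supOn hy, fun hy => hT.mem_of_forall_exists_le fun i j =>
    exists_le_of_le_supOn hT.1 (hy i j)⟩

lemma add_mem_add_of_potential (h₁ : IsLConvexSet T₁) (h₂ : IsLConvexSet T₂) {x y : Fin m → ℤ}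
    (hy : ∀ i j, ((y j - y i : ℤ) : WithTop ℤ) ≤ sumArcCost T₁ T₂ x i j) : x ∈ T₁ + T₂ := by
  have hy₁ : y ∈ T₁ := (h₁.mem_iff y).2 fun i j => (hy i j).trans (min_le_left _ _)
  have hy₂ : x - y ∈ T₂ := (h₂.mem_iff _).2 fun i j => by
    have := (hy j i).trans (min_le_right _ _)
    rw [← coe_sub_le_iff_le_coe_add] at this
    rwa [show (x - y) j - (x - y) i = y i - y j - (x i - x j) by simp only [Pi.sub_apply]; ring]
  simpa using Set.add_mem_add hy₁ hy₂

theorem exists_separating_of_notMem_add (h₁ : IsLConvexSet T₁) (h₂ : IsLConvexSet T₂)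
    {x : Fin m → ℤ} (hx : x ∉ T₁ + T₂) :
    ∃ I J : Finset (Fin m), Disjoint I J ∧ #I = #J ∧
      ∀ z ∈ T₁ + T₂, ∑ j ∈ J, z j - ∑ i ∈ I, z i < ∑ j ∈ J, x j - ∑ i ∈ I, x i := by
  obtain ⟨y, hy⟩ | ⟨σ, D, hD, hneg⟩ := exists_potential_or_negative_cycle (sumArcCost T₁ T₂ x)
  · exact absurd (add_mem_add_of_potential h₁ h₂ hy) hx
  · exact exists_separating_of_negative_cycle hD hneg

end IsLConvexSet

section LastCoordinate

variable {n : ℕ}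

lemma sum_eq_sum_castSucc_add {M : Type*} [AddCommMonoid M] (K : Finset (Fin (n + 1)))
    (g : Fin (n + 1) → M) :
    ∑ v ∈ K, g v = ∑ w ∈ univ.filter (fun w : Fin n => w.castSucc ∈ K), g w.castSucc +
      if Fin.last n ∈ K then g (Fin.last n) else 0 := by
  rw [sum_filter, ← Fin.sum_univ_castSucc (fun v => if v ∈ K then g v else 0), sum_ite_mem,
    univ_inter]

lemma sum_snoc_zero {M : Type*} [AddCommMonoid M] (K : Finset (Fin (n + 1))) (z : Fin n → M) :
    ∑ v ∈ K, (Fin.snoc z 0 : Fin (n + 1) → M) v =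
      ∑ w ∈ univ.filter (fun w : Fin n => w.castSucc ∈ K), z w := by
  simp [sum_eq_sum_castSucc_add K]

lemma snoc_zero_add (u v : Fin n → ℤ) :
    (Fin.snoc (u + v) 0 : Fin (n + 1) → ℤ) = Fin.snoc u 0 + Fin.snoc v 0 := by
  ext i
  refine Fin.lastCases ?_ (fun i => ?_) i <;> simp

lemma snoc_zero_mem_add_iff {T₁ T₂ : Set (Fin (n + 1) → ℤ)} (h₁ : IsLConvexSet T₁)
    (h₂ : IsLConvexSet T₂) {x : Fin n → ℤ} :
    Fin.snoc x 0 ∈ T₁ + T₂ ↔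
      x ∈ {u : Fin n → ℤ | Fin.snoc u (0 : ℤ) ∈ T₁} +
        {v : Fin n → ℤ | Fin.snoc v (0 : ℤ) ∈ T₂} := by
  constructor
  · rw [Set.mem_add]
    rintro ⟨a, ha, b, hb, hab⟩
    let μ := a (Fin.last n)
    let a' : Fin (n + 1) → ℤ := a + fun _ => -μ
    let b' : Fin (n + 1) → ℤ := b + fun _ => μ
    have ha'last : a' (Fin.last n) = 0 := by simp [a', μ]
    have hb'last : b' (Fin.last n) = 0 := by
      have := congrFun hab (Fin.last n)
      simp only [Pi.add_apply, Fin.snoc_last] at this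
      simp only [b', Pi.add_apply, μ]
      omega
    refine ⟨Fin.init a', ?_, Fin.init b', ?_, ?_⟩
    · show Fin.snoc (Fin.init a') (0 : ℤ) ∈ T₁
      rw [← ha'last, Fin.snoc_init_self]
      exact h₁.2.2 a ha _
    · show Fin.snoc (Fin.init b') (0 : ℤ) ∈ T₂
      rw [← hb'last, Fin.snoc_init_self]
      exact h₂.2.2 b hb _
    · ext i
      have := congrFun hab i.castSucc
      simp only [Pi.add_apply, Fin.snoc_castSucc] at this
      simp only [Fin.init, a', b', Pi.add_apply]
      omega
  · rintro ⟨u, hu, v, hv, rfl⟩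
    rw [snoc_zero_add]
    exact Set.add_mem_add hu hv

end LastCoordinate

namespace IsL2NatConvexSet

variable {n : ℕ} {S : Set (Fin n → ℤ)}

lemma nonempty (hS : IsL2NatConvexSet S) : S.Nonempty := by
  obtain ⟨S₁, S₂, hS₁, hS₂, rfl⟩ := hS
  exact hS₁.1.add hS₂.1

theorem exists_separating_of_notMem (hS : IsL2NatConvexSet S) {x : Fin n → ℤ} (hx : x ∉ S) :
    ∃ I J : Finset (Fin n), Disjoint I J ∧ (#I : ℤ) - #J ∈ ({-1, 0, 1} : Set ℤ) ∧
      ∀ z ∈ S, ∑ j ∈ J, z j - ∑ i ∈ I, z i < ∑ j ∈ J, x j - ∑ i ∈ I, x i := by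
  obtain ⟨_, _, ⟨-, T₁, hT₁, rfl⟩, ⟨-, T₂, hT₂, rfl⟩, rfl⟩ := hS
  obtain ⟨I, J, hIJ, hcard, hsep⟩ :=
    hT₁.exists_separating_of_notMem_add hT₂ ((snoc_zero_mem_add_iff hT₁ hT₂).not.2 hx)
  let restrict (K : Finset (Fin (n + 1))) := univ.filter fun w : Fin n => w.castSucc ∈ K
  refine ⟨restrict I, restrict J, ?_, ?_, fun z hz => ?_⟩
  · exact disjoint_filter.2 fun w _ hI hJ => disjoint_left.1 hIJ hI hJ
  · have hI := sum_eq_sum_castSucc_add I (1 : Fin (n + 1) → ℤ)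
    have hJ := sum_eq_sum_castSucc_add J (1 : Fin (n + 1) → ℤ)
    simp only [Pi.one_apply, ← cast_card] at hI hJ
    have hcard' : (#I : ℤ) = #J := by exact_mod_cast hcard
    simp only [restrict, Set.mem_insert_iff, Set.mem_singleton_iff]
    split_ifs at hI hJ <;> omega
  · simpa only [sum_snoc_zero] using hsep _ ((snoc_zero_mem_add_iff hT₁ hT₂).2 hz)

end IsL2NatConvexSet

/-- Polyhedral description of an L₂♮-convex set: there are bounds
`γ I J ∈ ℤ ∪ {+∞}` for disjoint `I J` with `|I| - |J| ∈ {-1,0,1}` such that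
`S = {x : x(J) - x(I) ≤ γ I J for all such I, J}`. -/
theorem polyhedral_description_of_L2nat_convex_set {n : ℕ} (S : Set (Fin n → ℤ))
    (hS : IsL2NatConvexSet S) :
    ∃ γ : Finset (Fin n) → Finset (Fin n) → WithTop ℤ,
      S = {x : Fin n → ℤ | ∀ I J : Finset (Fin n), Disjoint I J →
        (I.card : ℤ) - (J.card : ℤ) ∈ ({-1, 0, 1} : Set ℤ) →
        (((∑ j ∈ J, x j) - ∑ i ∈ I, x i : ℤ) : WithTop ℤ) ≤ γ I J} := by
  refine ⟨fun I J => supOn S fun z => ∑ j ∈ J, z j - ∑ i ∈ I, z i, Set.ext fun x => ⟨?_, ?_⟩⟩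
  · exact fun hx I J _ _ => le_supOn hx
  · intro hx
    by_contra hxS
    obtain ⟨I, J, hIJ, hcard, hsep⟩ := hS.exists_separating_of_notMem hxS
    obtain ⟨z, hz, hle⟩ := exists_le_of_le_supOn hS.nonempty (hx I J hIJ hcard)
    exact (hsep z hz).not_ge hle
end

section
/- If P ⊆ ℝ^n is an L₂♮-convex polyhedron, then there exist values γ_{I,J} ∈ ℝ ∪ {+∞}, indexed by pairs of disjoint subsets I, J of N = {1,…,n} with |I| − |J| ∈ {−1, 0, 1}, such that P = {x ∈ ℝ^n : x(J) − x(I) ≤ γ_{I,J} for all disjoint I, J ⊆ N with |I| − |J| ∈ {−1, 0, 1}}. -/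
open Pointwise

/-- A polyhedron in `ℝⁿ` is the solution set of a finite system of linear
inequalities. -/
def IsPolyhedron {n : ℕ} (P : Set (Fin n → ℝ)) : Prop :=
  ∃ (m : ℕ) (A : Fin m → Fin n → ℝ) (b : Fin m → ℝ),
    P = {x | ∀ i, ∑ j, A i j * x j ≤ b i}

/-- A nonempty polyhedron `P ⊆ ℝⁿ` is L-convex if it is closed under
componentwise max/min and under translation by real multiples of `𝟏`. -/
def IsLConvexPoly {n : ℕ} (P : Set (Fin n → ℝ)) : Prop :=
  IsPolyhedron P ∧ P.Nonempty ∧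
  (∀ x ∈ P, ∀ y ∈ P, x ⊔ y ∈ P ∧ x ⊓ y ∈ P) ∧
  (∀ x ∈ P, ∀ μ : ℝ, (x + fun _ => μ) ∈ P)

/-- A polyhedron `P ⊆ ℝⁿ` is L♮-convex if it is the intersection of an
L-convex polyhedron `Q ⊆ ℝ^{n+1}` with the hyperplane "last coordinate 0". -/
def IsLNatConvexPoly {n : ℕ} (P : Set (Fin n → ℝ)) : Prop :=
  IsPolyhedron P ∧
  ∃ Q : Set (Fin (n + 1) → ℝ), IsLConvexPoly Q ∧
    P = {x : Fin n → ℝ | Fin.snoc x (0 : ℝ) ∈ Q}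

/-- A polyhedron is L₂♮-convex if it is the Minkowski sum of two L♮-convex
polyhedra. -/
def IsL2NatConvexPoly {n : ℕ} (P : Set (Fin n → ℝ)) : Prop :=
  IsPolyhedron P ∧
  ∃ P₁ P₂ : Set (Fin n → ℝ), IsLNatConvexPoly P₁ ∧ IsLNatConvexPoly P₂ ∧ P = P₁ + P₂

/-!
An L♮-convex polyhedron is the slice `x_{n+1} = 0` of an L-convex polyhedron `Q ⊆ ℝ^{n+1}`, and an
L-convex polyhedron is cut out by difference constraints `q_j - q_i ≤ d(i, j)`. Slicing commutes
with Minkowski sums of translation-invariant sets, and `z ∈ Q₁ + Q₂` iff the system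
`u_j - u_i ≤ min (d₁(i, j), d₂(j, i) + z_j - z_i)` is feasible, i.e. has no negative simple cycle.
Fix on each edge of such a cycle which term of the minimum is attained; then, as a function of
`z`, the weight of the cycle is a constant plus `z(H) - z(T)`, where `T` and `H` are the tails and
heads of the edges using `d₂`, minus their common vertices: disjoint sets of equal size. Dropping
the coordinate `n + 1`, where `z` vanishes, changes each size by at most one. So every point
outside `P` violates an inequality `x(J) - x(I) ≤ γ_{I,J}`, with `γ_{I,J}` the supremum of
`x(J) - x(I)` over `P`.
-/

open Finset

variable {α M : Type*}

def walkWeight [AddCommMonoid M] (w : α → α → M) : List α → M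
  | a :: b :: t => w a b + walkWeight w (b :: t)
  | _ => 0

section WalkWeight

variable [AddCommMonoid M] (w : α → α → M)

@[simp] lemma walkWeight_nil : walkWeight w [] = 0 := rfl

@[simp] lemma walkWeight_singleton (a : α) : walkWeight w [a] = 0 := rfl

@[simp] lemma walkWeight_cons_cons (a b : α) (t : List α) :
    walkWeight w (a :: b :: t) = w a b + walkWeight w (b :: t) := rfl

lemma walkWeight_append (l₁ : List α) (x : α) (l₂ : List α) :
    walkWeight w (l₁ ++ x :: l₂) = walkWeight w (l₁ ++ [x]) + walkWeight w (x :: l₂) := by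
  induction l₁ with
  | nil => simp
  | cons a t ih => cases t <;> simp_all [add_assoc]

lemma walkWeight_eq_sum_zip (l : List α) :
    walkWeight w l = ((l.zip l.tail).map fun e => w e.1 e.2).sum := by
  induction l with
  | nil => rfl
  | cons a t ih => cases t <;> simp_all

lemma walkWeight_map {N : Type*} [AddCommMonoid N] (f : M →+ N) (l : List α) :
    walkWeight (fun a b => f (w a b)) l = f (walkWeight w l) := by
  induction l with
  | nil => simp
  | cons a t ih => cases t <;> simp_all

lemma walkWeight_add (w' : α → α → M) (l : List α) :
    walkWeight (fun a b => w a b + w' a b) l = walkWeight w l + walkWeight w' l := by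
  induction l with
  | nil => simp
  | cons a t ih => cases t <;> simp_all [add_add_add_comm]

end WalkWeight

lemma walkWeight_mono [AddCommMonoid M] [PartialOrder M] [IsOrderedAddMonoid M] {w w' : α → α → M}
    (h : ∀ a b, w a b ≤ w' a b) (l : List α) : walkWeight w l ≤ walkWeight w' l := by
  induction l with
  | nil => simp
  | cons a t ih => cases t <;> simp_all [add_le_add]

lemma walkWeight_sub_eq {G : Type*} [AddCommGroup G] (u : α → G) (a b : α) (l : List α) :
    walkWeight (fun i j => u j - u i) (a :: l ++ [b]) = u b - u a := by
  induction l generalizing a with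
  | nil => simp
  | cons c t ih => simp_all

lemma List.exists_split_of_not_nodup {l : List α} (h : ¬ l.Nodup) :
    ∃ l₁ x l₂ l₃, l = l₁ ++ x :: l₂ ++ x :: l₃ ∧ (x :: l₂).Nodup := by
  induction l using List.reverseRecOn with
  | nil => simp at h
  | append_singleton l y ih =>
    by_cases hl : l.Nodup
    · have hy : y ∈ l := by
        by_contra hy
        exact h (List.nodup_append.2 ⟨hl, List.nodup_singleton y, by grind⟩)
      obtain ⟨l₁, l₂, rfl⟩ := List.append_of_mem hy
      exact ⟨l₁, y, l₂, [], by simp, (List.nodup_append.1 hl).2.1⟩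
    · obtain ⟨l₁, x, l₂, l₃, rfl, hx⟩ := ih hl
      exact ⟨l₁, x, l₂, l₃ ++ [y], by simp, hx⟩

lemma WithTop.coe_sub_le_iff {G : Type*} [AddCommGroup G] [PartialOrder G] [IsOrderedAddMonoid G]
    {a b : G} {c : WithTop G} : ((a - b : G) : WithTop G) ≤ c ↔ (a : WithTop G) ≤ b + c := by
  induction c with
  | top => simp
  | coe c => norm_cast; exact sub_le_iff_le_add'

def diffConstraintSet (d : α → α → WithTop ℝ) : Set (α → ℝ) :=
  {u | ∀ i j, ((u j - u i : ℝ) : WithTop ℝ) ≤ d i j}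

def CyclesNonneg [AddCommMonoid M] [LE M] (w : α → α → M) : Prop :=
  ∀ x l, (x :: l).Nodup → 0 ≤ walkWeight w (x :: l ++ [x])

section Feasibility

variable {w : α → α → WithTop ℝ}

lemma cyclesNonneg_of_mem_diffConstraintSet {u : α → ℝ} (hu : u ∈ diffConstraintSet w) :
    CyclesNonneg w := by
  intro x l _
  calc (0 : WithTop ℝ) = ((walkWeight (fun i j => u j - u i) (x :: l ++ [x]) : ℝ) : WithTop ℝ) := by
        rw [walkWeight_sub_eq, sub_self, WithTop.coe_zero]
    _ = walkWeight (fun i j => ((u j - u i : ℝ) : WithTop ℝ)) (x :: l ++ [x]) :=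
        (walkWeight_map (fun i j => u j - u i) WithTop.addHom _).symm
    _ ≤ walkWeight w (x :: l ++ [x]) := walkWeight_mono hu _

variable [Fintype α]

/-- Cutting a closed subwalk out of a walk does not increase its weight. -/
lemma CyclesNonneg.exists_short_walk_le (hw : CyclesNonneg w) (l : List α) (j : α) :
    ∃ l', l'.length ≤ Fintype.card α ∧ walkWeight w (l' ++ [j]) ≤ walkWeight w (l ++ [j]) := by
  induction h : l.length using Nat.strong_induction_on generalizing l with
  | _ N ih =>
  by_cases hl : l.length ≤ Fintype.card α
  · exact ⟨l, hl, le_rfl⟩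
  obtain ⟨l₁, x, l₂, l₃, rfl, hx⟩ :=
    List.exists_split_of_not_nodup fun hnd => hl hnd.length_le_card
  obtain ⟨l', hl', hle⟩ := ih _ (by rw [← h]; simp) (l₁ ++ x :: l₃) rfl
  refine ⟨l', hl', hle.trans ?_⟩
  have hcut : walkWeight w (l₁ ++ x :: l₂ ++ x :: l₃ ++ [j]) =
      walkWeight w (l₁ ++ [x]) +
        (walkWeight w (x :: l₂ ++ [x]) + walkWeight w (x :: l₃ ++ [j])) := by
    rw [show l₁ ++ x :: l₂ ++ x :: l₃ ++ [j] = l₁ ++ x :: (l₂ ++ x :: (l₃ ++ [j])) by simp,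
      walkWeight_append w l₁,
      show x :: (l₂ ++ x :: (l₃ ++ [j])) = (x :: l₂) ++ x :: (l₃ ++ [j]) by simp,
      walkWeight_append w (x :: l₂)]
    simp
  rw [hcut, show l₁ ++ x :: l₃ ++ [j] = l₁ ++ x :: (l₃ ++ [j]) by simp, walkWeight_append w l₁]
  exact add_le_add le_rfl (le_add_of_nonneg_left (hw x l₂ hx))

lemma CyclesNonneg.exists_min_walk (hw : CyclesNonneg w) (j : α) :
    ∃ l₀ : List α, ∀ l, walkWeight w (l₀ ++ [j]) ≤ walkWeight w (l ++ [j]) := by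
  obtain ⟨l₀, -, hl₀⟩ := Set.exists_min_image _ (fun l => walkWeight w (l ++ [j]))
    (List.finite_length_le α (Fintype.card α)) ⟨[], by simp⟩
  refine ⟨l₀, fun l => ?_⟩
  obtain ⟨l', hl', hle⟩ := hw.exists_short_walk_le l j
  exact (hl₀ l' hl').trans hle

/-- Potentials given by the weights of shortest walks satisfy all difference constraints. -/
lemma CyclesNonneg.diffConstraintSet_nonempty (hw : CyclesNonneg w) :
    (diffConstraintSet w).Nonempty := by
  choose l₀ hl₀ using hw.exists_min_walk
  have hne : ∀ j, walkWeight w (l₀ j ++ [j]) ≠ ⊤ := fun j =>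
    ne_top_of_le_ne_top (by simp) (hl₀ j [])
  refine ⟨fun j => (walkWeight w (l₀ j ++ [j])).untop (hne j), fun i j => ?_⟩
  rw [WithTop.coe_sub_le_iff, WithTop.coe_untop, WithTop.coe_untop]
  have := hl₀ j (l₀ i ++ [i])
  rwa [List.append_assoc, List.singleton_append, walkWeight_append w (l₀ i), walkWeight_cons_cons,
    walkWeight_singleton, add_zero] at this

lemma diffConstraintSet_nonempty_iff : (diffConstraintSet w).Nonempty ↔ CyclesNonneg w :=
  ⟨fun ⟨_, hu⟩ => cyclesNonneg_of_mem_diffConstraintSet hu,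
    CyclesNonneg.diffConstraintSet_nonempty⟩

end Feasibility

/-- Along a simple cycle, the edges selected by `p` match their tails bijectively with their
heads; cancelling the common vertices leaves disjoint sets of equal size. -/
lemma exists_disjoint_card_eq_walkWeight_cycle [DecidableEq α] {G : Type*} [AddCommGroup G]
    {x : α} {l : List α} (hxl : (x :: l).Nodup) (p : α → α → Prop) [DecidableRel p] :
    ∃ H T : Finset α, Disjoint H T ∧ #H = #T ∧ ∀ z : α → G,
      walkWeight (fun a b => if p a b then z b - z a else 0) (x :: l ++ [x]) =
        ∑ v ∈ H, z v - ∑ v ∈ T, z v := by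
  set E := (x :: l).zip (l ++ [x])
  have hlen : (x :: l).length = (l ++ [x]).length := by simp
  have hfst : E.map Prod.fst = x :: l := List.map_fst_zip hlen.le
  have hsnd : E.map Prod.snd = l ++ [x] := List.map_snd_zip hlen.ge
  have hsnd_nodup : (E.map Prod.snd).Nodup := by
    rw [hsnd]; exact List.perm_append_singleton x l |>.nodup_iff.2 hxl
  have hE : E.Nodup := List.Nodup.of_map Prod.fst (hfst ▸ hxl)
  set A := E.toFinset.filter fun e => p e.1 e.2
  have hinj : ∀ f : α × α → α, (E.map f).Nodup → Set.InjOn f A := fun f hf e he e' he' =>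
    List.inj_on_of_nodup_map hf (by simpa [A] using (Finset.mem_filter.1 he).1)
      (by simpa [A] using (Finset.mem_filter.1 he').1)
  refine ⟨A.image Prod.snd \ A.image Prod.fst, A.image Prod.fst \ A.image Prod.snd,
    disjoint_sdiff_sdiff, card_sdiff_comm ?_, fun z => ?_⟩
  · rw [card_image_of_injOn (hinj _ hsnd_nodup), card_image_of_injOn (hinj _ (hfst ▸ hxl))]
  rw [sum_sdiff_sub_sum_sdiff, sum_image (hinj _ hsnd_nodup), sum_image (hinj _ (hfst ▸ hxl)),
    ← sum_sub_distrib, sum_filter, List.sum_toFinset _ hE, walkWeight_eq_sum_zip]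
  have hzip : (x :: l ++ [x]).zip (x :: l ++ [x]).tail = E := by
    simpa [E] using List.zip_append (r₁ := [x]) (r₂ := ([] : List α)) hlen
  rw [hzip]

section MinkowskiSum

lemma diffConstraintSet_inter (d₁ d₂ : α → α → WithTop ℝ) :
    diffConstraintSet d₁ ∩ diffConstraintSet d₂ =
      diffConstraintSet fun i j => min (d₁ i j) (d₂ i j) := by
  ext u
  simp only [diffConstraintSet, Set.mem_inter_iff, Set.mem_ofPred_eq, le_min_iff, forall_and]

lemma sub_mem_diffConstraintSet_iff {d : α → α → WithTop ℝ} {z u : α → ℝ} :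
    z - u ∈ diffConstraintSet d ↔
      u ∈ diffConstraintSet fun i j => d j i + ((z j - z i : ℝ) : WithTop ℝ) := by
  simp only [diffConstraintSet, Set.mem_ofPred_eq, Pi.sub_apply]
  rw [forall_comm]
  refine forall₂_congr fun i j => ?_
  rw [show z i - u i - (z j - u j) = u j - u i - (z j - z i) by ring, WithTop.coe_sub_le_iff,
    add_comm]

lemma mem_diffConstraintSet_add_iff {d₁ d₂ : α → α → WithTop ℝ} {z : α → ℝ} :
    z ∈ diffConstraintSet d₁ + diffConstraintSet d₂ ↔
      (diffConstraintSet fun i j =>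
        min (d₁ i j) (d₂ j i + ((z j - z i : ℝ) : WithTop ℝ))).Nonempty := by
  rw [← diffConstraintSet_inter]
  constructor
  · rintro ⟨u, hu, v, hv, rfl⟩
    exact ⟨u, hu, sub_mem_diffConstraintSet_iff.1 (by simpa using hv)⟩
  · rintro ⟨u, hu, hv⟩
    exact ⟨u, hu, z - u, sub_mem_diffConstraintSet_iff.2 hv, add_sub_cancel u z⟩

end MinkowskiSum

/-- A negative cycle of the system of `mem_diffConstraintSet_add_iff`, with the minimum resolved
edge by edge, supplies the separating inequality. -/
lemma exists_balanced_separation_of_notMem_add [Fintype α] {d₁ d₂ : α → α → WithTop ℝ}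
    {z : α → ℝ} (hz : z ∉ diffConstraintSet d₁ + diffConstraintSet d₂) :
    ∃ H T : Finset α, Disjoint H T ∧ #H = #T ∧ ∃ k : ℝ,
      (∀ z' ∈ diffConstraintSet d₁ + diffConstraintSet d₂, ∑ v ∈ T, z' v - ∑ v ∈ H, z' v ≤ k) ∧
      k < ∑ v ∈ T, z v - ∑ v ∈ H, z v := by
  classical
  set W : (α → ℝ) → α → α → WithTop ℝ :=
    fun z' i j => min (d₁ i j) (d₂ j i + ((z' j - z' i : ℝ) : WithTop ℝ))
  have hW : ∀ z', z' ∈ diffConstraintSet d₁ + diffConstraintSet d₂ ↔ CyclesNonneg (W z') :=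
    fun z' => mem_diffConstraintSet_add_iff.trans diffConstraintSet_nonempty_iff
  obtain ⟨x, l, hxl, hneg⟩ : ∃ x l, (x :: l).Nodup ∧ walkWeight (W z) (x :: l ++ [x]) < 0 := by
    simpa only [CyclesNonneg, not_forall, not_le, exists_prop] using (hW z).not.1 hz
  set c : α → α → Prop := fun i j => d₁ i j ≤ d₂ j i + ((z j - z i : ℝ) : WithTop ℝ)
  set V : α → α → WithTop ℝ := fun i j => if c i j then d₁ i j else d₂ j i
  obtain ⟨H, T, hHT, hcard, hsum⟩ :=
    exists_disjoint_card_eq_walkWeight_cycle (G := ℝ) hxl fun i j => ¬ c i j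
  have hsplit : ∀ z' : α → ℝ, walkWeight V (x :: l ++ [x]) + ↑(∑ v ∈ H, z' v - ∑ v ∈ T, z' v) =
      walkWeight (fun i j => V i j + ↑(if ¬ c i j then z' j - z' i else 0)) (x :: l ++ [x]) := by
    intro z'
    rw [walkWeight_add, ← hsum z']
    exact congrArg _
      (walkWeight_map (fun i j => if ¬ c i j then z' j - z' i else 0) WithTop.addHom _).symm
  have hle : ∀ z', walkWeight (W z') (x :: l ++ [x]) ≤
      walkWeight V (x :: l ++ [x]) + ↑(∑ v ∈ H, z' v - ∑ v ∈ T, z' v) := by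
    intro z'
    rw [hsplit]
    refine walkWeight_mono (fun i j => ?_) _
    by_cases hc : c i j <;> simp [W, V, hc]
  have heq : walkWeight (W z) (x :: l ++ [x]) =
      walkWeight V (x :: l ++ [x]) + ↑(∑ v ∈ H, z v - ∑ v ∈ T, z v) := by
    rw [hsplit]
    congr 1; funext i j
    show min _ _ = (if c i j then _ else _) + _
    by_cases hc : c i j
    · rw [if_pos hc, if_neg (not_not.2 hc), WithTop.coe_zero, add_zero, min_eq_left hc]
    · rw [if_neg hc, if_pos hc, min_eq_right (le_of_not_ge hc)]
  obtain ⟨k, hk⟩ := WithTop.ne_top_iff_exists.1 (WithTop.add_ne_top.1 (ne_top_of_lt (heq ▸ hneg))).1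
  refine ⟨H, T, hHT, hcard, k, fun z' hz' => ?_, ?_⟩
  · have := ((hW z').1 hz' x l hxl).trans (hle z')
    rw [← hk, ← WithTop.coe_add, WithTop.coe_nonneg] at this
    linarith
  · have := heq ▸ hneg
    rw [← hk, ← WithTop.coe_add, WithTop.coe_lt_zero] at this
    linarith

section LatticeClosed

variable {ι : Type*} {Q : Set (ι → ℝ)}

noncomputable def diffBound (Q : Set (ι → ℝ)) (i j : ι) : WithTop ℝ :=
  ⨆ q : Q, ((q.1 j - q.1 i : ℝ) : WithTop ℝ)

lemma subset_diffConstraintSet_diffBound : Q ⊆ diffConstraintSet (diffBound Q) :=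
  fun q hq _ _ => le_ciSup (α := WithTop ℝ) (OrderTop.bddAbove _) (⟨q, hq⟩ : Q)

variable [Fintype ι] {q : ι → ℝ}

/-- Translate near-extremal points of `Q` so that they agree with `q` at `i`, then take their
infimum. -/
lemma exists_mem_apply_eq_forall_le_add (hne : Q.Nonempty) (hinf : ∀ x ∈ Q, ∀ y ∈ Q, x ⊓ y ∈ Q)
    (htrans : ∀ x ∈ Q, ∀ μ : ℝ, (x + fun _ => μ) ∈ Q) (hq : q ∈ diffConstraintSet (diffBound Q))
    (i : ι) {ε : ℝ} (hε : 0 < ε) : ∃ s ∈ Q, s i = q i ∧ ∀ j, s j ≤ q j + ε := by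
  have : Nonempty Q := hne.to_subtype
  have hnear : ∀ j, ∃ p ∈ Q, p i - p j > q i - q j - ε := by
    intro j
    have hlt : (((q i - q j - ε : ℝ)) : WithTop ℝ) < diffBound Q j i :=
      (WithTop.coe_lt_coe.2 (by linarith)).trans_le (hq j i)
    obtain ⟨⟨p, hp⟩, hpq⟩ := exists_lt_of_lt_ciSup hlt
    exact ⟨p, hp, WithTop.coe_lt_coe.1 hpq⟩
  choose p hpQ hp using hnear
  set r : ι → ι → ℝ := fun j => p j + fun _ => q i - p j i
  have hne_univ : (Finset.univ : Finset ι).Nonempty := ⟨i, Finset.mem_univ i⟩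
  refine ⟨Finset.univ.inf' hne_univ r, Finset.inf'_mem Q hinf _ _ _ fun j _ => htrans _ (hpQ j) _,
    ?_, fun j => ?_⟩
  · simp [r, Finset.inf'_apply]
  · rw [Finset.inf'_apply]
    refine (Finset.inf'_le _ (Finset.mem_univ j)).trans ?_
    have := hp j
    simp only [r, Pi.add_apply]
    linarith

lemma exists_mem_le_le_add [Nonempty ι] (hne : Q.Nonempty) (hsup : ∀ x ∈ Q, ∀ y ∈ Q, x ⊔ y ∈ Q)
    (hinf : ∀ x ∈ Q, ∀ y ∈ Q, x ⊓ y ∈ Q) (htrans : ∀ x ∈ Q, ∀ μ : ℝ, (x + fun _ => μ) ∈ Q)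
    (hq : q ∈ diffConstraintSet (diffBound Q)) {ε : ℝ} (hε : 0 < ε) :
    ∃ p ∈ Q, ∀ v, q v ≤ p v ∧ p v ≤ q v + ε := by
  choose s hsQ hsi hsj using fun i => exists_mem_apply_eq_forall_le_add hne hinf htrans hq i hε
  refine ⟨Finset.univ.sup' Finset.univ_nonempty s,
    Finset.sup'_mem Q hsup _ _ _ fun i _ => hsQ i, fun v => ⟨?_, ?_⟩⟩
  · rw [Finset.sup'_apply, ← hsi v]
    exact Finset.le_sup' (fun i => s i v) (Finset.mem_univ v)
  · rw [Finset.sup'_apply]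
    exact Finset.sup'_le _ _ fun i _ => hsj i v

lemma eq_diffConstraintSet_diffBound [Nonempty ι] (hQ : IsClosed Q) (hne : Q.Nonempty)
    (hsup : ∀ x ∈ Q, ∀ y ∈ Q, x ⊔ y ∈ Q) (hinf : ∀ x ∈ Q, ∀ y ∈ Q, x ⊓ y ∈ Q)
    (htrans : ∀ x ∈ Q, ∀ μ : ℝ, (x + fun _ => μ) ∈ Q) :
    Q = diffConstraintSet (diffBound Q) := by
  refine subset_diffConstraintSet_diffBound.antisymm fun q hq => ?_
  rw [← hQ.closure_eq, Metric.mem_closure_iff]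
  intro ε hε
  obtain ⟨p, hpQ, hp⟩ := exists_mem_le_le_add hne hsup hinf htrans hq (half_pos hε)
  refine ⟨p, hpQ, ((dist_pi_le_iff (half_pos hε).le).2 fun v => ?_).trans_lt (half_lt_self hε)⟩
  rw [Real.dist_eq, abs_le]
  constructor <;> linarith [hp v]

end LatticeClosed

lemma IsPolyhedron.isClosed {n : ℕ} {P : Set (Fin n → ℝ)} (hP : IsPolyhedron P) : IsClosed P := by
  obtain ⟨m, A, b, rfl⟩ := hP
  simp only [Set.ofPred_forall]
  exact isClosed_iInter fun i => isClosed_le (by fun_prop) continuous_const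

lemma IsLConvexPoly.eq_diffConstraintSet {n : ℕ} {Q : Set (Fin (n + 1) → ℝ)}
    (hQ : IsLConvexPoly Q) : Q = diffConstraintSet (diffBound Q) :=
  let ⟨hpoly, hne, hlat, htrans⟩ := hQ
  eq_diffConstraintSet_diffBound hpoly.isClosed hne (fun x hx y hy => (hlat x hx y hy).1)
    (fun x hx y hy => (hlat x hx y hy).2) htrans

section Slice

variable {n : ℕ}

lemma snoc_init_eq_self_of_last_eq_zero {q : Fin (n + 1) → ℝ} (hq : q (Fin.last n) = 0) :
    Fin.snoc (Fin.init q) (0 : ℝ) = q := by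
  rw [← hq]; exact Fin.snoc_init_self q

lemma setOf_snoc_mem_nonempty {Q : Set (Fin (n + 1) → ℝ)} (hne : Q.Nonempty)
    (htrans : ∀ x ∈ Q, ∀ μ : ℝ, (x + fun _ => μ) ∈ Q) :
    {x : Fin n → ℝ | Fin.snoc x (0 : ℝ) ∈ Q}.Nonempty := by
  obtain ⟨q, hq⟩ := hne
  refine ⟨Fin.init (q + fun _ => -q (Fin.last n)), ?_⟩
  rw [Set.mem_ofPred_eq, snoc_init_eq_self_of_last_eq_zero (by simp)]
  exact htrans q hq _

/-- A decomposition `q₁ + q₂` of a point of the slice is shifted along `𝟏` into the slices. -/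
lemma setOf_snoc_mem_add {Q₁ Q₂ : Set (Fin (n + 1) → ℝ)}
    (htrans₁ : ∀ x ∈ Q₁, ∀ μ : ℝ, (x + fun _ => μ) ∈ Q₁)
    (htrans₂ : ∀ x ∈ Q₂, ∀ μ : ℝ, (x + fun _ => μ) ∈ Q₂) :
    {x : Fin n → ℝ | Fin.snoc x (0 : ℝ) ∈ Q₁} + {x | Fin.snoc x (0 : ℝ) ∈ Q₂} =
      {x | Fin.snoc x (0 : ℝ) ∈ Q₁ + Q₂} := by
  ext x
  constructor
  · rintro ⟨x₁, hx₁, x₂, hx₂, rfl⟩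
    refine ⟨_, hx₁, _, hx₂, funext fun v => ?_⟩
    refine Fin.lastCases ?_ (fun i => ?_) v <;> simp
  · rintro ⟨q₁, hq₁, q₂, hq₂, hsum⟩
    set μ := q₁ (Fin.last n)
    have hlast : q₂ (Fin.last n) = -μ := by
      have := congrFun hsum (Fin.last n)
      simp only [Pi.add_apply, Fin.snoc_last] at this
      linarith
    refine ⟨Fin.init (q₁ + fun _ => -μ), ?_, Fin.init (q₂ + fun _ => μ), ?_, funext fun i => ?_⟩
    · rw [Set.mem_ofPred_eq, snoc_init_eq_self_of_last_eq_zero (by simp [μ])]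
      exact htrans₁ q₁ hq₁ _
    · rw [Set.mem_ofPred_eq, snoc_init_eq_self_of_last_eq_zero (by simp [hlast])]
      exact htrans₂ q₂ hq₂ _
    · have := congrFun hsum (Fin.castSucc i)
      simp only [Pi.add_apply, Fin.snoc_castSucc] at this
      simp only [Pi.add_apply, Fin.init]
      linarith

lemma sum_preimage_castSucc [AddCommMonoid M] (x : Fin n → M)
    (s : Finset (Fin (n + 1))) :
    ∑ i ∈ s.preimage Fin.castSucc (Fin.castSucc_injective n).injOn, x i =
      ∑ v ∈ s, (Fin.snoc x 0 : Fin (n + 1) → M) v := by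
  rw [← sum_preimage Fin.castSucc s (Fin.castSucc_injective n).injOn (Fin.snoc x 0)]
  · simp
  · intro v _ hv
    rcases Fin.eq_castSucc_or_eq_last v with ⟨i, rfl⟩ | rfl
    · exact absurd ⟨i, rfl⟩ hv
    · simp

lemma card_preimage_castSucc_add (s : Finset (Fin (n + 1))) :
    #(s.preimage Fin.castSucc (Fin.castSucc_injective n).injOn) +
      (if Fin.last n ∈ s then 1 else 0) = #s := by
  classical
  rw [card_preimage]
  have hrange : {v ∈ s | v ∈ Set.range Fin.castSucc} = s.erase (Fin.last n) := by
    ext v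
    rcases Fin.eq_castSucc_or_eq_last v with ⟨i, rfl⟩ | rfl <;> simp [Fin.castSucc_ne_last]
  rw [hrange]
  split_ifs with h
  · exact card_erase_add_one h
  · rw [erase_eq_of_notMem h, add_zero]

lemma card_preimage_castSucc_sub_mem {H T : Finset (Fin (n + 1))} (hHT : Disjoint H T)
    (hcard : #H = #T) :
    (#(H.preimage Fin.castSucc (Fin.castSucc_injective n).injOn) : ℤ) -
      #(T.preimage Fin.castSucc (Fin.castSucc_injective n).injOn) ∈ ({-1, 0, 1} : Set ℤ) := by
  classical
  have hH := card_preimage_castSucc_add H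
  have hT := card_preimage_castSucc_add T
  have hlast : ¬ (Fin.last n ∈ H ∧ Fin.last n ∈ T) := fun h => disjoint_left.1 hHT h.1 h.2
  simp only [Set.mem_insert_iff, Set.mem_singleton_iff]
  split_ifs at hH hT <;> omega

end Slice

namespace IsL2NatConvexPoly

variable {n : ℕ} {P : Set (Fin n → ℝ)}

lemma exists_lConvex (hP : IsL2NatConvexPoly P) :
    ∃ Q₁ Q₂ : Set (Fin (n + 1) → ℝ), IsLConvexPoly Q₁ ∧ IsLConvexPoly Q₂ ∧
      P = {x | Fin.snoc x (0 : ℝ) ∈ Q₁ + Q₂} := by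
  obtain ⟨-, P₁, P₂, ⟨-, Q₁, hQ₁, rfl⟩, ⟨-, Q₂, hQ₂, rfl⟩, rfl⟩ := hP
  exact ⟨Q₁, Q₂, hQ₁, hQ₂, setOf_snoc_mem_add hQ₁.2.2.2 hQ₂.2.2.2⟩

lemma nonempty (hP : IsL2NatConvexPoly P) : P.Nonempty := by
  obtain ⟨-, P₁, P₂, ⟨-, Q₁, hQ₁, rfl⟩, ⟨-, Q₂, hQ₂, rfl⟩, rfl⟩ := hP
  exact (setOf_snoc_mem_nonempty hQ₁.2.1 hQ₁.2.2.2).add (setOf_snoc_mem_nonempty hQ₂.2.1 hQ₂.2.2.2)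

lemma exists_separation (hP : IsL2NatConvexPoly P) {x : Fin n → ℝ} (hx : x ∉ P) :
    ∃ I J : Finset (Fin n), Disjoint I J ∧ (#I : ℤ) - #J ∈ ({-1, 0, 1} : Set ℤ) ∧ ∃ k : ℝ,
      (∀ x' ∈ P, ∑ j ∈ J, x' j - ∑ i ∈ I, x' i ≤ k) ∧ k < ∑ j ∈ J, x j - ∑ i ∈ I, x i := by
  obtain ⟨Q₁, Q₂, hQ₁, hQ₂, rfl⟩ := hP.exists_lConvex
  obtain ⟨d₁, rfl⟩ : ∃ d, Q₁ = diffConstraintSet d := ⟨_, hQ₁.eq_diffConstraintSet⟩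
  obtain ⟨d₂, rfl⟩ : ∃ d, Q₂ = diffConstraintSet d := ⟨_, hQ₂.eq_diffConstraintSet⟩
  obtain ⟨H, T, hHT, hcard, k, hk, hkx⟩ := exists_balanced_separation_of_notMem_add hx
  refine ⟨H.preimage _ (Fin.castSucc_injective n).injOn,
    T.preimage _ (Fin.castSucc_injective n).injOn,
    disjoint_left.2 fun i hH hT => disjoint_left.1 hHT (mem_preimage.1 hH) (mem_preimage.1 hT),
    card_preimage_castSucc_sub_mem hHT hcard, k, fun x' hx' => ?_, ?_⟩
  · rw [sum_preimage_castSucc, sum_preimage_castSucc]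
    exact hk _ hx'
  · rwa [sum_preimage_castSucc, sum_preimage_castSucc]

end IsL2NatConvexPoly

/-- Polyhedral description of an L₂♮-convex polyhedron: there are bounds
`γ I J ∈ ℝ ∪ {+∞}` for disjoint `I J` with `|I| - |J| ∈ {-1,0,1}` such that
`P = {x : x(J) - x(I) ≤ γ I J for all such I, J}`. -/
theorem polyhedral_description_of_L2nat_convex_polyhedron {n : ℕ} (P : Set (Fin n → ℝ))
    (hP : IsL2NatConvexPoly P) :
    ∃ γ : Finset (Fin n) → Finset (Fin n) → WithTop ℝ,
      P = {x : Fin n → ℝ | ∀ I J : Finset (Fin n), Disjoint I J →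
        (I.card : ℤ) - (J.card : ℤ) ∈ ({-1, 0, 1} : Set ℤ) →
        (((∑ j ∈ J, x j) - ∑ i ∈ I, x i : ℝ) : WithTop ℝ) ≤ γ I J} := by
  have : Nonempty P := hP.nonempty.to_subtype
  refine ⟨fun I J => ⨆ x : P, ((∑ j ∈ J, x.1 j - ∑ i ∈ I, x.1 i : ℝ) : WithTop ℝ),
    Set.ext fun x => ⟨fun hx I J _ _ => ?_, fun hx => ?_⟩⟩
  · exact le_ciSup (α := WithTop ℝ) (OrderTop.bddAbove _) (⟨x, hx⟩ : P)
  by_contra hxP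
  obtain ⟨I, J, hIJ, hcard, k, hk, hkx⟩ := hP.exists_separation hxP
  have hγ := (hx I J hIJ hcard).trans (ciSup_le fun x' => WithTop.coe_le_coe.2 (hk x' x'.2))
  exact (WithTop.coe_le_coe.1 hγ).not_gt hkx
end

section
/- Let N = {1,…,n}, let E₁, E₂ ⊆ {(i,j) ∈ N × N : i ≠ j}, and let γ⁽¹⁾ : E₁ → ℝ and γ⁽²⁾ : E₂ → ℝ be such that for k = 1, 2 the polyhedron P_k = {y ∈ ℝ^n : y_j − y_i ≤ γ⁽ᵏ⁾_{ij} for all (i,j) ∈ E_k} is nonempty and L-convex. For i ≠ j in N and k = 1, 2, let λ(i,j;G_k) ∈ ℝ ∪ {+∞} denote the minimum total γ⁽ᵏ⁾-length of a directed path from i to j in the directed graph G_k = (N, E_k) with edge lengths γ⁽ᵏ⁾ (equal to +∞ if no such path exists). Then the L₂-convex polyhedron P = P₁ + P₂ equals the set of all x ∈ ℝ^n such that for every m ≥ 1 and every choice of 2m distinct indices i₁,…,i_m, j₁,…,j_m ∈ N (with the convention i_{m+1} = i₁): Σ_{r=1}^{m}(x_{j_r} − x_{i_r}) ≤ Σ_{r=1}^{m}(λ(i_r,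 j_r; G₁) + λ(i_{r+1}, j_r; G₂)). -/
/-!
Encode the digraph `G_k` by the length function that is `γ⁽ᵏ⁾` on `E_k` and `⊤` off it; then
`P_k` is its set of potentials and `λ(·,·;G_k)` its shortest-walk distance. A point `x` lies in
`P₁ + P₂` iff some `y` is a potential both for `A = λ(·,·;G₁)` and for
`B a b = λ(b,a;G₂) + x_b - x_a`, i.e. for `A ⊓ B`, and such a `y` exists iff no simple cycle has
negative `A ⊓ B`-length (take for `y v` the least length of a simple walk ending at `v`).
Both `A` and `B` satisfy the triangle inequality, so two consecutive edges of a simple cycle on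
which the same one of `A`, `B` is the smaller can be short-cut without increasing its length.
What remains are simple cycles on which `A` and `B` alternate, and these are exactly the cycles
`i₁ j₁ ⋯ i_m j_m` of the statement.
-/

open Pointwise

/-- `λ(i,j;G)`: the minimum total `γ`-length of a directed path from `i` to `j`
in the directed graph `G = (N, E)` with edge lengths `γ` (in `ℝ ∪ {+∞}`,
equal to `+∞` if no path exists, via `sInf ∅ = ⊤` in `EReal`). -/
noncomputable def pathLambda {n : ℕ} (E : Finset (Fin n × Fin n))
    (γ : Fin n × Fin n → ℝ) (i j : Fin n) : EReal :=
  sInf {v : EReal | ∃ (t : ℕ) (w : Fin (t + 1) → Fin n),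
    w 0 = i ∧ w (Fin.last t) = j ∧
    (∀ s : Fin t, (w s.castSucc, w s.succ) ∈ E) ∧
    v = ((∑ s : Fin t, γ (w s.castSucc, w s.succ) : ℝ) : EReal)}

open Finset Function

theorem EReal.coe_finsetSum {ι : Type*} (s : Finset ι) (g : ι → ℝ) :
    ((∑ i ∈ s, g i : ℝ) : EReal) = ∑ i ∈ s, (g i : EReal) :=
  map_sum (⟨⟨(↑), EReal.coe_zero⟩, EReal.coe_add⟩ : ℝ →+ EReal) g s

lemma EReal.sum_eq_top_of_eq_top {ι : Type*} {s : Finset ι} {g : ι → EReal}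
    (hbot : ∀ i ∈ s, g i ≠ ⊥) {i : ι} (hi : i ∈ s) (htop : g i = ⊤) : ∑ j ∈ s, g j = ⊤ := by
  classical
  rw [← add_sum_erase s g hi, htop, EReal.top_add_of_ne_bot]
  exact sum_induction g (· ≠ ⊥) (fun a b ha hb => EReal.add_ne_bot_iff.2 ⟨ha, hb⟩)
    (by simp) fun j hj => hbot j (mem_of_mem_erase hj)

lemma List.getLast?_ofFn_succ {α : Type*} {t : ℕ} (w : Fin (t + 1) → α) :
    (List.ofFn w).getLast? = some (w (Fin.last t)) := by
  rw [List.ofFn_succ']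
  simp

lemma Fin.odd_and_iff_even_of_alternating {t : ℕ} {P : Fin (t + 1) → Prop} (h0 : P 0)
    (hstep : ∀ k, P (k + 1) ↔ ¬ P k) : Odd t ∧ ∀ k, P k ↔ Even (k : ℕ) := by
  have hP : ∀ k, P k ↔ Even (k : ℕ) := by
    intro k
    induction k using Fin.induction with
    | zero => simpa using h0
    | succ k ih => rw [← Fin.coeSucc_eq_succ, hstep, ih, Fin.coeSucc_eq_succ, Fin.val_succ,
        Fin.val_castSucc, Nat.even_add_one]
  refine ⟨?_, hP⟩
  have := hstep (Fin.last t)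
  rw [Fin.last_add_one, hP, hP, Fin.val_last] at this
  simpa using this

noncomputable section Walks

variable {V : Type*}

def pathWeight (f : V → V → EReal) : List V → EReal
  | [] => 0
  | [_] => 0
  | a :: b :: l => f a b + pathWeight f (b :: l)

@[simp] lemma pathWeight_nil (f : V → V → EReal) : pathWeight f [] = 0 := rfl

@[simp] lemma pathWeight_singleton (f : V → V → EReal) (a : V) : pathWeight f [a] = 0 := rfl

@[simp] lemma pathWeight_cons_cons (f : V → V → EReal) (a b : V) (l : List V) :
    pathWeight f (a :: b :: l) = f a b + pathWeight f (b :: l) := rfl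

lemma pathWeight_append_cons (f : V → V → EReal) (l₁ : List V) (a : V) (l₂ : List V) :
    pathWeight f (l₁ ++ a :: l₂) = pathWeight f (l₁ ++ [a]) + pathWeight f (a :: l₂) := by
  induction l₁ with
  | nil => simp
  | cons b l₁ ih =>
    cases l₁ with
    | nil => simp
    | cons c l₁ => simp only [List.cons_append, pathWeight_cons_cons] at ih ⊢; rw [ih, add_assoc]

lemma pathWeight_append_singleton (f : V → V → EReal) {l : List V} {a : V}
    (ha : l.getLast? = some a) (b : V) :
    pathWeight f (l ++ [b]) = pathWeight f l + f a b := by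
  obtain ⟨l, rfl⟩ := List.getLast?_eq_some_iff.1 ha
  rw [List.append_assoc, List.singleton_append, pathWeight_append_cons]
  simp

lemma pathWeight_ne_bot {f : V → V → EReal} (hf : ∀ a b, f a b ≠ ⊥) :
    ∀ l : List V, pathWeight f l ≠ ⊥
  | [] | [_] => by simp
  | a :: b :: l => by
    rw [pathWeight_cons_cons, EReal.add_ne_bot_iff]
    exact ⟨hf a b, pathWeight_ne_bot hf (b :: l)⟩

lemma pathWeight_ofFn (f : V → V → EReal) {t : ℕ} (w : Fin (t + 1) → V) :
    pathWeight f (List.ofFn w) = ∑ s : Fin t, f (w s.castSucc) (w s.succ) := by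
  induction t with
  | zero => simp
  | succ t ih =>
    rw [List.ofFn_succ, Fin.sum_univ_succ]
    simp only [Fin.castSucc_succ]
    rw [← ih (fun i => w i.succ), List.ofFn_succ]
    rfl

def cycleWeight (f : V → V → EReal) {t : ℕ} (v : Fin (t + 1) → V) : EReal :=
  ∑ k, f (v k) (v (k + 1))

lemma pathWeight_ofFn_append (f : V → V → EReal) {t : ℕ} (v : Fin (t + 1) → V) :
    pathWeight f (List.ofFn v ++ [v 0]) = cycleWeight f v := by
  have : List.ofFn v ++ [v 0] = List.ofFn (Fin.snoc v (v 0)) := by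
    rw [List.ofFn_succ' (Fin.snoc v (v 0))]
    simp
  rw [this, pathWeight_ofFn, cycleWeight, Fin.sum_univ_castSucc, Fin.sum_univ_castSucc]
  simp only [Fin.succ_castSucc, Fin.snoc_castSucc, Fin.succ_last, Fin.snoc_last,
    Fin.coeSucc_eq_succ, Fin.last_add_one]

lemma pathWeight_cons_append_singleton (f : V → V → EReal) (a : V) (l : List V) :
    pathWeight f (a :: l ++ [a]) = cycleWeight f (a :: l).get := by
  conv_lhs => rw [← List.ofFn_get (a :: l)]
  exact pathWeight_ofFn_append f (a :: l).get

lemma cycleWeight_comp_add_right (f : V → V → EReal) {t : ℕ} (v : Fin (t + 1) → V)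
    (s : Fin (t + 1)) : cycleWeight f (v ∘ (· + s)) = cycleWeight f v :=
  Fintype.sum_equiv (Equiv.addRight s) _ _ fun k => by simp [add_right_comm]

lemma cycleWeight_comp_castSucc_le {f : V → V → EReal} {t : ℕ} {v : Fin (t + 2) → V}
    (h : f (v (Fin.last t).castSucc) (v 0) ≤
      f (v (Fin.last t).castSucc) (v (Fin.last (t + 1))) + f (v (Fin.last (t + 1))) (v 0)) :
    cycleWeight f (v ∘ Fin.castSucc) ≤ cycleWeight f v := by
  rw [cycleWeight, cycleWeight, Fin.sum_univ_castSucc, Fin.sum_univ_castSucc,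
    Fin.sum_univ_castSucc, add_assoc]
  simpa [Fin.coeSucc_eq_succ] using add_le_add_right h _

end Walks

noncomputable section Potentials

variable {V : Type*} {f : V → V → EReal}

def IsPotential (f : V → V → EReal) (y : V → ℝ) : Prop :=
  ∀ a b, ((y b - y a : ℝ) : EReal) ≤ f a b

lemma IsPotential.mono {g : V → V → EReal} {y : V → ℝ} (hy : IsPotential f y) (hfg : f ≤ g) :
    IsPotential g y :=
  fun a b => (hy a b).trans (hfg a b)

lemma IsPotential.coe_sub_le_pathWeight {y : V → ℝ} (hy : IsPotential f y) :
    ∀ {l : List V} {i j : V}, l.head? = some i → l.getLast? = some j →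
      ((y j - y i : ℝ) : EReal) ≤ pathWeight f l
  | [], _, _, hi, _ => by simp at hi
  | [a], i, j, hi, hj => by simp_all
  | a :: b :: l, i, j, hi, hj => by
    obtain rfl : a = i := by simpa using hi
    rw [pathWeight_cons_cons, show y j - y a = (y b - y a) + (y j - y b) by ring, EReal.coe_add]
    exact add_le_add (hy a b) (hy.coe_sub_le_pathWeight rfl (by simpa using hj))

def walkDist (f : V → V → EReal) (i j : V) : EReal :=
  ⨅ (l : List V) (_ : l.head? = some i) (_ : l.getLast? = some j), pathWeight f l

lemma walkDist_le_pathWeight {l : List V} {i j : V} (hi : l.head? = some i)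
    (hj : l.getLast? = some j) : walkDist f i j ≤ pathWeight f l :=
  (iInf_le _ l).trans <| (iInf_le _ hi).trans <| iInf_le _ hj

lemma walkDist_le (f : V → V → EReal) : walkDist f ≤ f := fun a b => by
  simpa using walkDist_le_pathWeight (f := f) (l := [a, b]) rfl rfl

lemma IsPotential.walkDist {y : V → ℝ} (hy : IsPotential f y) : IsPotential (walkDist f) y :=
  fun _ _ => le_iInf fun _ => le_iInf fun hi => le_iInf fun hj => hy.coe_sub_le_pathWeight hi hj

lemma walkDist_ne_bot {y : V → ℝ} (hy : IsPotential f y) (a b : V) : walkDist f a b ≠ ⊥ :=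
  ne_bot_of_le_ne_bot (EReal.coe_ne_bot _) (hy.walkDist a b)

lemma walkDist_triangle {a b c : V} (hab : walkDist f a b ≠ ⊥) (hbc : walkDist f b c ≠ ⊥) :
    walkDist f a c ≤ walkDist f a b + walkDist f b c := by
  refine EReal.le_add_of_forall_gt (.inl hab) (.inr hbc) fun r₁ hr₁ r₂ hr₂ => ?_
  obtain ⟨l₁, ha₁, hb₁, hl₁⟩ : ∃ l₁ : List V, l₁.head? = some a ∧ l₁.getLast? = some b ∧
      pathWeight f l₁ < r₁ := by simpa only [walkDist, iInf_lt_iff, exists_prop] using hr₁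
  obtain ⟨l₂, hb₂, hc₂, hl₂⟩ : ∃ l₂ : List V, l₂.head? = some b ∧ l₂.getLast? = some c ∧
      pathWeight f l₂ < r₂ := by simpa only [walkDist, iInf_lt_iff, exists_prop] using hr₂
  obtain ⟨l₁, rfl⟩ := List.getLast?_eq_some_iff.1 hb₁
  obtain ⟨l₂, rfl⟩ := List.head?_eq_some_iff.1 hb₂
  calc walkDist f a c ≤ pathWeight f (l₁ ++ b :: l₂) := by
        refine walkDist_le_pathWeight ?_ ?_
        · cases l₁ <;> simp_all
        · simpa [List.getLast?_append] using hc₂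
    _ = pathWeight f (l₁ ++ [b]) + pathWeight f (b :: l₂) := pathWeight_append_cons f l₁ b l₂
    _ ≤ r₁ + r₂ := add_le_add hl₁.le hl₂.le

lemma exists_nodup_pathWeight_le
    (hcyc : ∀ (t : ℕ) (v : Fin (t + 1) → V), Injective v → 0 ≤ cycleWeight f v)
    {l : List V} {a : V} (hl : l.Nodup) (ha : l.getLast? = some a) (b : V) :
    ∃ l' : List V, (l'.Nodup ∧ l'.getLast? = some b) ∧
      pathWeight f l' ≤ pathWeight f l + f a b := by
  rw [← pathWeight_append_singleton f ha]
  by_cases hb : b ∈ l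
  · obtain ⟨p, q, rfl⟩ := List.append_of_mem hb
    refine ⟨p ++ [b], ⟨hl.sublist ((List.singleton_sublist.2 (by simp)).append_left p),
      by simp⟩, ?_⟩
    have hcycle : 0 ≤ pathWeight f (b :: q ++ [b]) := by
      rw [pathWeight_cons_append_singleton]
      exact hcyc _ _ (List.nodup_iff_injective_get.1 (List.nodup_append.1 hl).2.1)
    rw [List.append_assoc, List.cons_append, pathWeight_append_cons f p b (q ++ [b])]
    exact le_add_of_nonneg_right hcycle
  · exact ⟨l ++ [b], ⟨hl.append (by simp) (by simpa using hb), by simp⟩, le_rfl⟩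

theorem exists_isPotential [Finite V] (hf : ∀ a b, f a b ≠ ⊥)
    (hcyc : ∀ (t : ℕ) (v : Fin (t + 1) → V), Injective v → 0 ≤ cycleWeight f v) :
    ∃ y, IsPotential f y := by
  have := Fintype.ofFinite V
  let S : V → Set (List V) := fun v => {l | l.Nodup ∧ l.getLast? = some v}
  have hS : ∀ v, (S v).Finite := fun v =>
    (List.finite_length_le V (Fintype.card V)).subset fun l hl => hl.1.length_le_card
  choose L hL hLmin using fun v =>
    Set.exists_min_image (S v) (pathWeight f) (hS v) ⟨[v], by simp, rfl⟩
  have hLcoe : ∀ v, ((pathWeight f (L v)).toReal : EReal) = pathWeight f (L v) := fun v =>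
    EReal.coe_toReal (ne_top_of_le_ne_top (by simp) (hLmin v [v] ⟨by simp, rfl⟩))
      (pathWeight_ne_bot hf _)
  refine ⟨fun v => (pathWeight f (L v)).toReal, fun a b => ?_⟩
  obtain ⟨l, hl, hle⟩ := exists_nodup_pathWeight_le hcyc (hL a).1 (hL a).2 b
  rw [EReal.coe_sub, hLcoe, hLcoe, EReal.sub_le_iff_le_add (.inl (pathWeight_ne_bot hf _))
    (.inr (hf a b)), add_comm]
  exact (hLmin b l hl).trans hle

lemma isPotential_sub_of_isPotential_swap {x y : V → ℝ}
    (hy : IsPotential (fun a b => f b a + ((x b - x a : ℝ) : EReal)) y) :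
    IsPotential f (x - y) := fun a b => by
  have h := hy b a
  rw [← EReal.sub_le_iff_le_add (.inl (EReal.coe_ne_bot _)) (.inl (EReal.coe_ne_top _)),
    ← EReal.coe_sub] at h
  refine le_of_eq_of_le ?_ h
  simp only [Pi.sub_apply]
  ring_nf

end Potentials

noncomputable section EdgeWeights

variable {V : Type*} [DecidableEq V]

def edgeWeight (E : Finset (V × V)) (γ : V × V → ℝ) (a b : V) : EReal :=
  if (a, b) ∈ E then (γ (a, b) : EReal) else ⊤

lemma isPotential_edgeWeight_iff {E : Finset (V × V)} {γ : V × V → ℝ} {y : V → ℝ} :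
    IsPotential (edgeWeight E γ) y ↔ ∀ e ∈ E, y e.2 - y e.1 ≤ γ e := by
  refine ⟨fun hy e he => ?_, fun hy a b => ?_⟩
  · have := hy e.1 e.2
    simp only [edgeWeight, he, if_true] at this
    exact_mod_cast this
  · unfold edgeWeight
    split_ifs with hab
    · exact EReal.coe_le_coe_iff.2 (hy _ hab)
    · exact le_top

theorem pathLambda_eq_walkDist {n : ℕ} (E : Finset (Fin n × Fin n)) (γ : Fin n × Fin n → ℝ) :
    pathLambda E γ = walkDist (edgeWeight E γ) := by
  ext i j
  apply le_antisymm
  · refine le_iInf fun l => le_iInf fun hi => le_iInf fun hj => ?_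
    obtain ⟨t, w, rfl⟩ : ∃ t, ∃ w : Fin (t + 1) → Fin n, l = List.ofFn w := by
      cases l with
      | nil => simp at hi
      | cons b q => exact ⟨q.length, (b :: q).get, (List.ofFn_get _).symm⟩
    rw [pathWeight_ofFn]
    by_cases hE : ∀ s : Fin t, (w s.castSucc, w s.succ) ∈ E
    · refine sInf_le ⟨t, w, by simpa using hi,
        Option.some_inj.1 ((List.getLast?_ofFn_succ w).symm.trans hj), hE, ?_⟩
      simp [edgeWeight, hE, EReal.coe_finsetSum]
    · push Not at hE
      obtain ⟨s, hs⟩ := hE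
      rw [EReal.sum_eq_top_of_eq_top (fun _ _ => by unfold edgeWeight; split_ifs <;> simp)
        (mem_univ s) (by simp [edgeWeight, hs])]
      exact le_top
  · refine le_sInf ?_
    rintro _ ⟨t, w, rfl, rfl, hE, rfl⟩
    refine (walkDist_le_pathWeight (l := List.ofFn w) (by simp)
      (List.getLast?_ofFn_succ w)).trans_eq ?_
    rw [pathWeight_ofFn, EReal.coe_finsetSum]
    simp [edgeWeight, hE]

end EdgeWeights

section AlternatingCycles

variable {V : Type*} {A B : V → V → EReal}

lemma cycleWeight_inf_nonneg_of_alternating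
    (halt : ∀ (m : ℕ) (i j : Fin (m + 1) → V), Injective (Sum.elim i j) →
      0 ≤ ∑ r, (A (i r) (j r) + B (j r) (i (r + 1))))
    {t : ℕ} {v : Fin (t + 1) → V} (hv : Injective v) (h0 : A (v 0) (v 1) ≤ B (v 0) (v 1))
    (hstep : ∀ k, A (v (k + 1)) (v (k + 1 + 1)) ≤ B (v (k + 1)) (v (k + 1 + 1)) ↔
      ¬ A (v k) (v (k + 1)) ≤ B (v k) (v (k + 1))) :
    0 ≤ cycleWeight (A ⊓ B) v := by
  obtain ⟨⟨m, rfl⟩, hpar⟩ := Fin.odd_and_iff_even_of_alternating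
    (P := fun k => A (v k) (v (k + 1)) ≤ B (v k) (v (k + 1))) (by simpa using h0) hstep
  let e : Fin (m + 1) → Fin (2 * m + 1 + 1) := fun r => ⟨2 * r, by omega⟩
  let o : Fin (m + 1) → Fin (2 * m + 1 + 1) := fun r => ⟨2 * r + 1, by omega⟩
  have he : ∀ r, e r + 1 = o r := fun r => Fin.ext <| by
    simp only [Fin.val_add, Fin.val_one, e, o]
    exact Nat.mod_eq_of_lt (by omega)
  have ho : ∀ r, o r + 1 = e (r + 1) := fun r => Fin.ext <| by
    simp only [Fin.val_add, Fin.val_one, Fin.val_one', Nat.add_mod_mod, e, o]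
    rw [← Nat.mul_mod_mul_left]
    congr 1
  have hbij : Bijective (Sum.elim e o) := by
    refine (Fintype.bijective_iff_injective_and_card _).2 ⟨?_, by simp; omega⟩
    rintro (r | r) (s | s) h <;> simp [e, o, Fin.ext_iff] at h ⊢ <;> omega
  have hsum : cycleWeight (A ⊓ B) v =
      ∑ r, (A (v (e r)) (v (o r)) + B (v (o r)) (v (e (r + 1)))) := by
    rw [cycleWeight, ← hbij.sum_comp, Fintype.sum_sum_type, ← sum_add_distrib]
    refine sum_congr rfl fun r _ => ?_
    have hA : A (v (e r)) (v (o r)) ≤ B (v (e r)) (v (o r)) := by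
      simpa [he] using (hpar (e r)).2 (by simp [e])
    have hB : ¬ A (v (o r)) (v (e (r + 1))) ≤ B (v (o r)) (v (e (r + 1))) := by
      simpa [ho] using (hpar (o r)).not.2 (by simp [o])
    simp only [Sum.elim_inl, Sum.elim_inr, Pi.inf_apply, he, ho, inf_eq_left.2 hA,
      inf_eq_right.2 (not_le.1 hB).le]
  rw [hsum]
  exact halt m (v ∘ e) (v ∘ o) (by rw [← Sum.comp_elim]; exact hv.comp hbij.1)

lemma le_iff_not_le_of_inf_add_inf_lt {a b d : V} (hA : A a d ≤ A a b + A b d)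
    (hB : B a d ≤ B a b + B b d) (h : (A ⊓ B) a b + (A ⊓ B) b d < (A ⊓ B) a d) :
    A b d ≤ B b d ↔ ¬ A a b ≤ B a b := by
  simp only [Pi.inf_apply] at h
  constructor
  · intro h₂ h₁
    rw [inf_eq_left.2 h₁, inf_eq_left.2 h₂] at h
    exact lt_irrefl _ (h.trans_le (inf_le_left.trans hA))
  · intro h₁
    by_contra h₂
    rw [inf_eq_right.2 (not_le.1 h₁).le, inf_eq_right.2 (not_le.1 h₂).le] at h
    exact lt_irrefl _ (h.trans_le (inf_le_right.trans hB))

theorem cycleWeight_inf_nonneg (hA : ∀ a b c, A a c ≤ A a b + A b c)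
    (hB : ∀ a b c, B a c ≤ B a b + B b c) (hA₀ : ∀ a, 0 ≤ A a a) (hB₀ : ∀ a, 0 ≤ B a a)
    (halt : ∀ (m : ℕ) (i j : Fin (m + 1) → V), Injective (Sum.elim i j) →
      0 ≤ ∑ r, (A (i r) (j r) + B (j r) (i (r + 1)))) :
    ∀ (t : ℕ) (v : Fin (t + 1) → V), Injective v → 0 ≤ cycleWeight (A ⊓ B) v := by
  intro t
  induction t with
  | zero => intro v _; simpa [cycleWeight] using le_inf (hA₀ (v 0)) (hB₀ (v 0))
  | succ t ih =>
    intro v hv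
    by_cases hshort : ∃ k, (A ⊓ B) (v k) (v (k + 1 + 1)) ≤
        (A ⊓ B) (v k) (v (k + 1)) + (A ⊓ B) (v (k + 1)) (v (k + 1 + 1))
    · -- rotate `v (k + 1)` to the last position and drop it
      obtain ⟨k, hk⟩ := hshort
      have h₁ : (Fin.last t).castSucc + (k + 1 + 1) = k := by
        rw [show (Fin.last t).castSucc + (k + 1 + 1) = k + ((Fin.last t).castSucc + 1 + 1) by
          abel, Fin.coeSucc_eq_succ, Fin.succ_last, Fin.last_add_one, add_zero]
      have h₂ : Fin.last (t + 1) + (k + 1 + 1) = k + 1 := by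
        rw [show Fin.last (t + 1) + (k + 1 + 1) = k + 1 + (Fin.last (t + 1) + 1) by abel,
          Fin.last_add_one, add_zero]
      rw [← cycleWeight_comp_add_right _ v (k + 1 + 1)]
      refine (ih _ ((hv.comp (add_left_injective _)).comp (Fin.castSucc_injective _))).trans
        (cycleWeight_comp_castSucc_le ?_)
      simpa [h₁, h₂] using hk
    · push Not at hshort
      have hstep := fun k => le_iff_not_le_of_inf_add_inf_lt (hA _ _ _) (hB _ _ _) (hshort k)
      by_cases h0 : A (v 0) (v 1) ≤ B (v 0) (v 1)
      · exact cycleWeight_inf_nonneg_of_alternating halt hv h0 hstep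
      · rw [← cycleWeight_comp_add_right _ v 1]
        exact cycleWeight_inf_nonneg_of_alternating halt (hv.comp (add_left_injective 1))
          (by simpa using (hstep 0).2 h0) fun k => hstep (k + 1)

end AlternatingCycles

section SumOfPotentials

variable {V : Type*} {f₁ f₂ : V → V → EReal}

lemma sum_sub_comp_add_one {m : ℕ} (x : V → ℝ) (i j : Fin (m + 1) → V) :
    ∑ r, (x (j r) - x (i r)) = ∑ r, (x (j r) - x (i (r + 1))) := by
  simp only [sum_sub_distrib, Fintype.sum_equiv (Equiv.addRight 1) (fun r => x (i (r + 1)))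
    (fun r => x (i r)) fun _ => rfl]

lemma coe_sum_sub_le_sum_walkDist {y₁ y₂ : V → ℝ} (h₁ : IsPotential f₁ y₁)
    (h₂ : IsPotential f₂ y₂) {m : ℕ} (i j : Fin (m + 1) → V) :
    ((∑ r, ((y₁ + y₂) (j r) - (y₁ + y₂) (i r)) : ℝ) : EReal) ≤
      ∑ r, (walkDist f₁ (i r) (j r) + walkDist f₂ (i (r + 1)) (j r)) := by
  have hsplit : ∑ r, ((y₁ + y₂) (j r) - (y₁ + y₂) (i r)) =
      ∑ r, ((y₁ (j r) - y₁ (i r)) + (y₂ (j r) - y₂ (i (r + 1)))) := by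
    rw [sum_add_distrib, ← sum_sub_comp_add_one, ← sum_add_distrib]
    simp only [Pi.add_apply]
    exact sum_congr rfl fun _ _ => by ring
  rw [hsplit, EReal.coe_finsetSum]
  exact sum_le_sum fun r _ => by
    rw [EReal.coe_add]
    exact add_le_add (h₁.walkDist _ _) (h₂.walkDist _ _)

lemma sum_add_coe_sub_nonneg {m : ℕ} {x : V → ℝ} {i j : Fin (m + 1) → V} {c : Fin (m + 1) → EReal}
    (h : ((∑ r, (x (j r) - x (i r)) : ℝ) : EReal) ≤ ∑ r, c r) :
    0 ≤ ∑ r, (c r + ((x (i (r + 1)) - x (j r) : ℝ) : EReal)) := by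
  set D := ∑ r, (x (j r) - x (i r))
  have hD : -D = ∑ r, (x (i (r + 1)) - x (j r)) := by
    rw [show D = _ from sum_sub_comp_add_one x i j, ← sum_neg_distrib]
    simp only [neg_sub]
  calc (0 : EReal) = (D : EReal) + ((-D : ℝ) : EReal) := by
        rw [← EReal.coe_add, add_neg_cancel, EReal.coe_zero]
    _ ≤ ∑ r, c r + ((-D : ℝ) : EReal) := add_le_add_left h _
    _ = ∑ r, (c r + ((x (i (r + 1)) - x (j r) : ℝ) : EReal)) := by
        rw [hD, EReal.coe_finsetSum, ← sum_add_distrib]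

theorem exists_isPotential_and_isPotential_sub [Finite V] {y₁ y₂ : V → ℝ}
    (h₁ : IsPotential f₁ y₁) (h₂ : IsPotential f₂ y₂) {x : V → ℝ}
    (hx : ∀ (m : ℕ) (i j : Fin (m + 1) → V), Injective (Sum.elim i j) →
      ((∑ r, (x (j r) - x (i r)) : ℝ) : EReal) ≤
        ∑ r, (walkDist f₁ (i r) (j r) + walkDist f₂ (i (r + 1)) (j r))) :
    ∃ y, IsPotential f₁ y ∧ IsPotential f₂ (x - y) := by
  set A := walkDist f₁
  set B : V → V → EReal := fun a b => walkDist f₂ b a + ((x b - x a : ℝ) : EReal)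
  have hB : ∀ a b c, B a c ≤ B a b + B b c := fun a b c => calc
    B a c ≤ walkDist f₂ c b + walkDist f₂ b a + ((x b - x a + (x c - x b) : ℝ) : EReal) := by
      rw [show x b - x a + (x c - x b) = x c - x a by ring]
      exact add_le_add_left (walkDist_triangle (walkDist_ne_bot h₂ _ _)
        (walkDist_ne_bot h₂ _ _)) _
    _ = B a b + B b c := by
      simp only [B, EReal.coe_add]
      abel
  have hAB : ∀ a b, (A ⊓ B) a b ≠ ⊥ := fun a b => by
    simp [A, B, walkDist_ne_bot h₁, walkDist_ne_bot h₂, -EReal.coe_sub]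
  obtain ⟨y, hy⟩ := exists_isPotential hAB <| cycleWeight_inf_nonneg
    (fun _ _ _ => walkDist_triangle (walkDist_ne_bot h₁ _ _) (walkDist_ne_bot h₁ _ _)) hB
    (fun a => by simpa using h₁.walkDist a a) (fun a => by simpa [B] using h₂.walkDist a a)
    fun m i j hij => by simpa only [B, add_assoc] using sum_add_coe_sub_nonneg (hx m i j hij)
  exact ⟨y, (hy.mono inf_le_left).mono (walkDist_le f₁),
    (isPotential_sub_of_isPotential_swap (hy.mono inf_le_right)).mono (walkDist_le f₂)⟩

theorem setOf_isPotential_add_setOf_isPotential [Finite V] (h₁ : ∃ y, IsPotential f₁ y)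
    (h₂ : ∃ y, IsPotential f₂ y) :
    {y | IsPotential f₁ y} + {y | IsPotential f₂ y} = {x : V → ℝ |
      ∀ (m : ℕ) (i j : Fin (m + 1) → V), Injective (Sum.elim i j) →
        ((∑ r, (x (j r) - x (i r)) : ℝ) : EReal) ≤
          ∑ r, (walkDist f₁ (i r) (j r) + walkDist f₂ (i (r + 1)) (j r))} := by
  obtain ⟨y₁, hy₁⟩ := h₁
  obtain ⟨y₂, hy₂⟩ := h₂
  ext x
  constructor
  · rintro ⟨z₁, hz₁, z₂, hz₂, rfl⟩ m i j -
    exact coe_sum_sub_le_sum_walkDist hz₁ hz₂ i j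
  · intro hx
    obtain ⟨y, hy, hxy⟩ := exists_isPotential_and_isPotential_sub hy₁ hy₂ hx
    exact ⟨y, hy, x - y, hxy, add_sub_cancel y x⟩

end SumOfPotentials

theorem L2_convex_polyhedron_cycle_description_general {n : ℕ}
    (E₁ E₂ : Finset (Fin n × Fin n))
    (γ₁ γ₂ : Fin n × Fin n → ℝ)
    (P₁ P₂ : Set (Fin n → ℝ))
    (hP₁def : P₁ = {y : Fin n → ℝ | ∀ e ∈ E₁, y e.2 - y e.1 ≤ γ₁ e})
    (hP₂def : P₂ = {y : Fin n → ℝ | ∀ e ∈ E₂, y e.2 - y e.1 ≤ γ₂ e})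
    (hL₁ : IsLConvexPoly P₁) (hL₂ : IsLConvexPoly P₂) :
    P₁ + P₂ = {x : Fin n → ℝ |
      ∀ m : ℕ, ∀ i j : Fin (m + 1) → Fin n,
        Function.Injective (Sum.elim i j) →
        (((∑ r : Fin (m + 1), (x (j r) - x (i r))) : ℝ) : EReal) ≤
          ∑ r : Fin (m + 1),
            (pathLambda E₁ γ₁ (i r) (j r) + pathLambda E₂ γ₂ (i (r + 1)) (j r))} := by
  have hP₁ : P₁ = {y | IsPotential (edgeWeight E₁ γ₁) y} := by
    simp only [hP₁def, isPotential_edgeWeight_iff]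
  have hP₂ : P₂ = {y | IsPotential (edgeWeight E₂ γ₂) y} := by
    simp only [hP₂def, isPotential_edgeWeight_iff]
  have h₁ := hL₁.2.1
  have h₂ := hL₂.2.1
  rw [hP₁] at h₁
  rw [hP₂] at h₂
  rw [pathLambda_eq_walkDist, pathLambda_eq_walkDist, hP₁, hP₂]
  exact setOf_isPotential_add_setOf_isPotential h₁ h₂

/-- Cycle description of the L₂-convex polyhedron `P = P₁ + P₂`: `x ∈ P` iff for
every `m ≥ 1` and all `2m` distinct indices `i₁,…,i_m, j₁,…,j_m` (with
`i_{m+1} = i₁` cyclically),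
`Σ_r (x_{j_r} - x_{i_r}) ≤ Σ_r (λ(i_r,j_r;G₁) + λ(i_{r+1},j_r;G₂))`. -/
theorem L2_convex_polyhedron_cycle_description {n : ℕ}
    (E₁ E₂ : Finset (Fin n × Fin n))
    (hE₁ : ∀ e ∈ E₁, e.1 ≠ e.2) (hE₂ : ∀ e ∈ E₂, e.1 ≠ e.2)
    (γ₁ γ₂ : Fin n × Fin n → ℝ)
    (P₁ P₂ : Set (Fin n → ℝ))
    (hP₁def : P₁ = {y : Fin n → ℝ | ∀ e ∈ E₁, y e.2 - y e.1 ≤ γ₁ e})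
    (hP₂def : P₂ = {y : Fin n → ℝ | ∀ e ∈ E₂, y e.2 - y e.1 ≤ γ₂ e})
    (hL₁ : IsLConvexPoly P₁) (hL₂ : IsLConvexPoly P₂) :
    P₁ + P₂ = {x : Fin n → ℝ |
      ∀ m : ℕ, ∀ i j : Fin (m + 1) → Fin n,
        Function.Injective (Sum.elim i j) →
        (((∑ r : Fin (m + 1), (x (j r) - x (i r))) : ℝ) : EReal) ≤
          ∑ r : Fin (m + 1),
            (pathLambda E₁ γ₁ (i r) (j r) + pathLambda E₂ γ₂ (i (r + 1)) (j r))} :=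
  L2_convex_polyhedron_cycle_description_general E₁ E₂ γ₁ γ₂ P₁ P₂ hP₁def hP₂def hL₁ hL₂
end
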